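/- The ideal I = (x_1x_3, x_1x_4, x_2x_4, x_2x_5, x_3x_5) in K[x_1,…,x_5] is a set-theoretic complete intersection: its height equals 3 and it is the radical of an ideal generated by 3 elements. -/

import Mathlib

open MvPolynomial

/-- The height of an ideal `I`: the infimum of the heights of the primes containing `I`. -/
noncomputable def idealHeight {R : Type*} [CommRing R] (I : Ideal R) : ℕ∞ :=
  ⨅ P ∈ {P : PrimeSpectrum R | I ≤ P.asIdeal}, Order.height P

section Aux

variable {K : Type*} [Field K]

/-! ### Kernel description of ideals generated by variables -/

/-- The substitution killing the variables in `s`. -/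
noncomputable def killMap {N : ℕ} (s : Set (Fin N)) [DecidablePred (· ∈ s)] :
    Fin N → MvPolynomial (Fin N) K :=
  fun i => if i ∈ s then 0 else X i

theorem sub_aeval_killMap_mem {N : ℕ} (s : Set (Fin N)) [DecidablePred (· ∈ s)]
    (p : MvPolynomial (Fin N) K) :
    p - aeval (killMap s) p ∈ Ideal.span (X '' s : Set (MvPolynomial (Fin N) K)) := by
  induction p using MvPolynomial.induction_on with
  | C a => simp [aeval_C, algebraMap_eq]
  | add p q hp hq =>
      have := Ideal.add_mem _ hp hq
      simpa [map_add, add_sub_add_comm] using this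
  | mul_X p i hp =>
      rw [map_mul, aeval_X, killMap]
      by_cases hi : i ∈ s
      · rw [if_pos hi, mul_zero, sub_zero]
        exact Ideal.mul_mem_left _ _ (Ideal.subset_span ⟨i, hi, rfl⟩)
      · rw [if_neg hi]
        have : p * X i - (aeval (killMap s)) p * X i = (p - aeval (killMap s) p) * X i := by ring
        rw [this]
        exact Ideal.mul_mem_right _ _ hp

theorem ker_aeval_killMap {N : ℕ} (s : Set (Fin N)) [DecidablePred (· ∈ s)] :
    RingHom.ker ((aeval (killMap s) : MvPolynomial (Fin N) K →ₐ[K] MvPolynomial (Fin N) K) :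
        MvPolynomial (Fin N) K →+* MvPolynomial (Fin N) K) =
      Ideal.span (X '' s : Set (MvPolynomial (Fin N) K)) := by
  apply le_antisymm
  · intro p hp
    rw [RingHom.mem_ker] at hp
    have hmem := sub_aeval_killMap_mem (K := K) s p
    rw [show ((aeval (killMap s) : MvPolynomial (Fin N) K →ₐ[K] MvPolynomial (Fin N) K) :
      MvPolynomial (Fin N) K →+* MvPolynomial (Fin N) K) p = aeval (killMap s) p from rfl] at hp
    rwa [hp, sub_zero] at hmem
  · rw [Ideal.span_le]
    rintro x ⟨i, hi, rfl⟩
    rw [SetLike.mem_coe, RingHom.mem_ker]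
    show aeval (killMap s) (X i) = 0
    rw [aeval_X, killMap, if_pos hi]

theorem span_X_isPrime {N : ℕ} (s : Set (Fin N)) [DecidablePred (· ∈ s)] :
    (Ideal.span (X '' s : Set (MvPolynomial (Fin N) K))).IsPrime := by
  rw [← ker_aeval_killMap s]
  exact RingHom.ker_isPrime _

theorem X_notMem_span {N : ℕ} (s : Set (Fin N)) {j : Fin N} (hj : j ∉ s) :
    (X j : MvPolynomial (Fin N) K) ∉ Ideal.span (X '' s : Set (MvPolynomial (Fin N) K)) := by
  rw [mem_ideal_span_X_image]
  push_neg
  refine ⟨Finsupp.single j 1, ?_, ?_⟩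
  · simp [support_X]
  · intro i hi
    rcases eq_or_ne i j with rfl | hij
    · exact absurd hi hj
    · simp [Finsupp.single_apply, (Ne.symm hij)]

/-! ### Height lower bound from three variables -/

theorem three_le_height {P : PrimeSpectrum (MvPolynomial (Fin 5) K)} {a b c : Fin 5}
    (hab : a ≠ b) (hac : a ≠ c) (hbc : b ≠ c)
    (ha : (X a : MvPolynomial (Fin 5) K) ∈ P.asIdeal)
    (hb : (X b : MvPolynomial (Fin 5) K) ∈ P.asIdeal)
    (hc : (X c : MvPolynomial (Fin 5) K) ∈ P.asIdeal) :
    3 ≤ Order.height P := by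
  classical
  let q0 : PrimeSpectrum (MvPolynomial (Fin 5) K) := ⟨⊥, Ideal.bot_prime⟩
  let q1 : PrimeSpectrum (MvPolynomial (Fin 5) K) := ⟨Ideal.span (X '' {a}), span_X_isPrime {a}⟩
  let q2 : PrimeSpectrum (MvPolynomial (Fin 5) K) :=
    ⟨Ideal.span (X '' {a, b}), span_X_isPrime {a, b}⟩
  have h01 : q0 < q1 := by
    rw [← PrimeSpectrum.asIdeal_lt_asIdeal]
    refine lt_of_le_of_ne bot_le ?_
    intro h
    have hmem : (X a : MvPolynomial (Fin 5) K) ∈ Ideal.span (X '' ({a} : Set (Fin 5))) :=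
      Ideal.subset_span ⟨a, rfl, rfl⟩
    simp only [q0, q1] at h
    rw [← h] at hmem
    exact X_ne_zero a ((Ideal.mem_bot).mp hmem)
  have h12 : q1 < q2 := by
    rw [← PrimeSpectrum.asIdeal_lt_asIdeal]
    refine lt_of_le_of_ne (Ideal.span_mono (Set.image_mono (by simp))) ?_
    intro h
    have hmem : (X b : MvPolynomial (Fin 5) K) ∈ Ideal.span (X '' ({a, b} : Set (Fin 5))) :=
      Ideal.subset_span ⟨b, by simp, rfl⟩
    simp only [q1, q2] at h
    rw [← h] at hmem
    exact X_notMem_span {a} (by simp [hab.symm]) hmem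
  have h2P : q2 < P := by
    rw [← PrimeSpectrum.asIdeal_lt_asIdeal]
    refine lt_of_le_of_ne ?_ ?_
    · rw [Ideal.span_le]
      rintro x ⟨i, hi, rfl⟩
      rcases hi with rfl | rfl
      · exact ha
      · exact hb
    · intro h
      have hmem := hc
      simp only [q2] at h
      rw [← h] at hmem
      exact X_notMem_span {a, b} (j := c) (by simp [hac.symm, hbc.symm]) hmem
  let ch : LTSeries (PrimeSpectrum (MvPolynomial (Fin 5) K)) :=
    ⟨3, ![q0, q1, q2, P], by
      intro i
      fin_cases i
      · exact h01
      · exact h12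
      · exact h2P⟩
  have hlast : ch.last = P := rfl
  have := Order.length_le_height_last (p := ch)
  rw [hlast] at this
  exact this

/-! ### The algebraic independence step along a chain of primes -/

theorem aeval_fin_cons {A' : Type*} [CommRing A'] [Algebra K A'] {n : ℕ}
    (u : A') (z : Fin n → A') (F : MvPolynomial (Fin (n + 1)) K) :
    aeval (Fin.cons u z : Fin (n + 1) → A') F =
      Polynomial.eval₂ ((aeval z : MvPolynomial (Fin n) K →ₐ[K] A') : MvPolynomial (Fin n) K →+* A')
        u (finSuccEquiv K n F) := by
  have : ((aeval (Fin.cons u z : Fin (n+1) → A') : MvPolynomial (Fin (n+1)) K →ₐ[K] A') :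
        MvPolynomial (Fin (n+1)) K →+* A') =
      (Polynomial.eval₂RingHom
        ((aeval z : MvPolynomial (Fin n) K →ₐ[K] A') : MvPolynomial (Fin n) K →+* A') u).comp
        ((finSuccEquiv K n : MvPolynomial (Fin (n+1)) K ≃ₐ[K] Polynomial (MvPolynomial (Fin n) K)) :
          MvPolynomial (Fin (n+1)) K →+* Polynomial (MvPolynomial (Fin n) K)) := by
    apply MvPolynomial.ringHom_ext
    · intro r
      simp [finSuccEquiv_apply, Polynomial.eval₂_C]
    · intro i
      refine Fin.cases ?_ ?_ i
      · simp [finSuccEquiv_X_zero]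
      · intro j
        simp [finSuccEquiv_X_succ]
  exact RingHom.congr_fun this F

theorem indep_step {A : Type*} [CommRing A] [Algebra K A] {n : ℕ}
    {p q : Ideal A} [hp : p.IsPrime] (hpq : p ≤ q) {t : A} (htq : t ∈ q) (htp : t ∉ p)
    {y : Fin n → A}
    (hy : AlgebraicIndependent K (fun i => Ideal.Quotient.mk q (y i))) :
    AlgebraicIndependent K (fun i => Ideal.Quotient.mk p ((Fin.cons t y : Fin (n+1) → A) i)) := by
  rw [algebraicIndependent_iff]
  intro F hF
  have hfam : (fun i => Ideal.Quotient.mk p ((Fin.cons t y : Fin (n+1) → A) i)) =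
      (Fin.cons (Ideal.Quotient.mk p t) (fun i => Ideal.Quotient.mk p (y i)) :
        Fin (n+1) → A ⧸ p) := by
    funext i
    refine Fin.cases rfl (fun j => rfl) i
  rw [hfam, aeval_fin_cons] at hF
  set ψp := ((aeval (fun i => Ideal.Quotient.mk p (y i)) :
      MvPolynomial (Fin n) K →ₐ[K] A ⧸ p) : MvPolynomial (Fin n) K →+* A ⧸ p) with hψp
  set ψq := ((aeval (fun i => Ideal.Quotient.mk q (y i)) :
      MvPolynomial (Fin n) K →ₐ[K] A ⧸ q) : MvPolynomial (Fin n) K →+* A ⧸ q) with hψq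
  set tbar := Ideal.Quotient.mk p t with htbar
  have htbar0 : tbar ≠ 0 := fun h => htp (Ideal.Quotient.eq_zero_iff_mem.mp h)
  have hcoeff : ∀ H : Polynomial (MvPolynomial (Fin n) K),
      Polynomial.eval₂ ψp tbar H = 0 → H.coeff 0 = 0 := by
    intro H hH
    set π := Ideal.Quotient.factor hpq with hπ
    have h1 : π (Polynomial.eval₂ ψp tbar H) = 0 := by rw [hH, map_zero]
    rw [Polynomial.hom_eval₂] at h1
    have hπψ : π.comp ψp = ψq := by
      apply MvPolynomial.ringHom_ext
      · intro r
        simp only [hψp, hψq, hπ, RingHom.coe_coe, RingHom.coe_comp, Function.comp_apply, aeval_C,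
          IsScalarTower.algebraMap_apply K A (A ⧸ p), IsScalarTower.algebraMap_apply K A (A ⧸ q),
          Ideal.Quotient.algebraMap_eq, Ideal.Quotient.factor_mk]
      · intro i
        simp [hψp, hψq, hπ, Ideal.Quotient.factor_mk]
    have hπt : π tbar = 0 := by
      rw [htbar, hπ, Ideal.Quotient.factor_mk, Ideal.Quotient.eq_zero_iff_mem]
      exact htq
    rw [hπψ, hπt, Polynomial.eval₂_at_zero] at h1
    have hinj : Function.Injective (aeval (fun i => Ideal.Quotient.mk q (y i)) :
        MvPolynomial (Fin n) K →ₐ[K] A ⧸ q) := algebraicIndependent_iff_injective_aeval.mp hy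
    have h2 : (aeval (fun i => Ideal.Quotient.mk q (y i))) (H.coeff 0) = 0 := h1
    exact hinj (by rw [h2, map_zero] : (aeval (fun i => Ideal.Quotient.mk q (y i)))
      (H.coeff 0) = (aeval (fun i => Ideal.Quotient.mk q (y i))) 0)
  have key : ∀ (m : ℕ) (H : Polynomial (MvPolynomial (Fin n) K)), H.natDegree ≤ m →
      Polynomial.eval₂ ψp tbar H = 0 → H = 0 := by
    intro m
    induction m with
    | zero =>
      intro H hdeg hH
      have hC : H = Polynomial.C (H.coeff 0) := Polynomial.eq_C_of_natDegree_le_zero hdeg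
      rw [hC, hcoeff H hH, map_zero]
    | succ m ih =>
      intro H hdeg hH
      have h0 : H.coeff 0 = 0 := hcoeff H hH
      obtain ⟨H', rfl⟩ := Polynomial.X_dvd_iff.mpr h0
      rw [Polynomial.eval₂_mul, Polynomial.eval₂_X] at hH
      have hH' : Polynomial.eval₂ ψp tbar H' = 0 := by
        rcases mul_eq_zero.mp hH with h | h
        · exact absurd h htbar0
        · exact h
      rcases eq_or_ne H' 0 with rfl | hne
      · rw [mul_zero]
      · have hd : H'.natDegree ≤ m := by
          have := Polynomial.natDegree_mul
            (p := (Polynomial.X : Polynomial (MvPolynomial (Fin n) K)))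
            (q := H') Polynomial.X_ne_zero hne
          rw [Polynomial.natDegree_X] at this
          omega
        rw [ih H' hd hH', mul_zero]
  have hG : finSuccEquiv K n F = 0 := key _ _ le_rfl hF
  exact (map_eq_zero_iff _ (AlgEquiv.injective (finSuccEquiv K n))).mp hG

end Aux

section Count
universe u
variable {K : Type u} [Field K]

theorem not_algIndep_six (z : Fin 6 → MvPolynomial (Fin 5) K)
    (hz : AlgebraicIndependent K z) : False := by
  classical
  set D : ℕ := (Finset.univ.sup fun i => (z i).totalDegree) + 1 with hD
  have hD1 : 1 ≤ D := Nat.le_add_left 1 _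
  have hDz : ∀ i, (z i).totalDegree ≤ D := by
    intro i
    have h := Finset.le_sup (f := fun i => (z i).totalDegree) (Finset.mem_univ i)
    omega
  set c : ℕ := (7 * D) ^ 5 + 1 with hc
  set m : ℕ := 6 * D * c with hm
  set e : (Fin 6 → Fin (c + 1)) → (Fin 6 →₀ ℕ) :=
    fun f => Finsupp.equivFunOnFinite.symm (fun i => (f i : ℕ)) with he
  have he_inj : Function.Injective e := by
    intro f g hfg
    funext i
    have : ((f i : ℕ)) = ((g i : ℕ)) := by
      have := congrArg (fun s => s i) hfg
      simpa [he] using this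
    exact Fin.val_injective this
  have hmon : LinearIndependent K (fun f : Fin 6 → Fin (c + 1) =>
      (monomial (e f) (1 : K) : MvPolynomial (Fin 6) K)) := by
    have := (basisMonomials (Fin 6) K).linearIndependent
    have h2 := this.comp e he_inj
    rw [coe_basisMonomials] at h2
    exact h2
  have haeval_inj : Function.Injective
      (aeval z : MvPolynomial (Fin 6) K →ₐ[K] MvPolynomial (Fin 5) K) :=
    algebraicIndependent_iff_injective_aeval.mp hz
  have hw : LinearIndependent K (fun f : Fin 6 → Fin (c + 1) =>
      aeval z (monomial (e f) (1 : K))) := by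
    have := hmon.map' (aeval z : MvPolynomial (Fin 6) K →ₐ[K] MvPolynomial (Fin 5) K).toLinearMap
      (LinearMap.ker_eq_bot.mpr (fun a b h => haeval_inj h))
    exact this
  set M := restrictTotalDegree (Fin 5) K m with hM
  have hmem : ∀ f : Fin 6 → Fin (c + 1), aeval z (monomial (e f) (1 : K)) ∈ M := by
    intro f
    rw [hM, mem_restrictTotalDegree]
    rw [aeval_monomial]
    have h1 : ((e f).prod fun i k => z i ^ k) = ∏ i : Fin 6, z i ^ ((f i : ℕ)) := by
      rw [he]
      rw [Finsupp.prod_pow]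
      simp
    calc ((algebraMap K (MvPolynomial (Fin 5) K)) 1 * (e f).prod fun i k => z i ^ k).totalDegree
        ≤ ((algebraMap K (MvPolynomial (Fin 5) K)) 1).totalDegree
            + ((e f).prod fun i k => z i ^ k).totalDegree := totalDegree_mul _ _
      _ ≤ 0 + ((e f).prod fun i k => z i ^ k).totalDegree := by
          simp
      _ = (∏ i : Fin 6, z i ^ ((f i : ℕ))).totalDegree := by rw [zero_add, h1]
      _ ≤ ∑ i : Fin 6, (z i ^ ((f i : ℕ))).totalDegree := totalDegree_finset_prod _ _
      _ ≤ ∑ _i : Fin 6, c * D := by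
          apply Finset.sum_le_sum
          intro i _
          calc (z i ^ ((f i : ℕ))).totalDegree ≤ (f i : ℕ) * (z i).totalDegree :=
                totalDegree_pow _ _
            _ ≤ c * D := Nat.mul_le_mul (Nat.lt_succ_iff.mp (f i).isLt) (hDz i)
      _ = 6 * (c * D) := by
          rw [Finset.sum_const, Finset.card_univ, Fintype.card_fin, smul_eq_mul]
      _ = m := by rw [hm]; ring
  set w' : (Fin 6 → Fin (c + 1)) → M := fun f => ⟨_, hmem f⟩ with hw'
  have hw'li : LinearIndependent K w' := by
    have hcomp : (M.subtype) ∘ w' = fun f => aeval z (monomial (e f) (1 : K)) := rfl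
    exact LinearIndependent.of_comp M.subtype (by rw [hcomp]; exact hw)
  have hcard := hw'li.cardinal_lift_le_rank
  set T : Set (Fin 5 →₀ ℕ) := {s | (s.sum fun _ e => e) ≤ m} with hT
  have hrank : Module.rank K M = Cardinal.lift.{u} (Cardinal.mk T) := by
    rw [hM]
    have h : restrictTotalDegree (Fin 5) K m = restrictSupport K T := rfl
    rw [h]
    simpa using ((basisRestrictSupport K T).mk_eq_rank).symm
  have hTle : Cardinal.mk T ≤ Cardinal.mk (Fin 5 → Fin (m + 1)) := by
    refine Cardinal.mk_le_of_injective (f := fun s => fun i =>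
      (⟨(s : Fin 5 →₀ ℕ) i, ?_⟩ : Fin (m + 1))) ?_
    · have hle : (s : Fin 5 →₀ ℕ) i ≤ ((s : Fin 5 →₀ ℕ).sum fun _ e => e) := by
        rw [Finsupp.sum_fintype _ _ (fun _ => rfl)]
        exact Finset.single_le_sum (f := fun j => (s : Fin 5 →₀ ℕ) j)
          (fun _ _ => Nat.zero_le _) (Finset.mem_univ i)
      exact Nat.lt_succ_of_le (le_trans hle s.2)
    · intro s t hst
      apply Subtype.ext
      apply Finsupp.ext
      intro i
      have := congrArg (fun g => ((g i : Fin (m+1)) : ℕ)) hst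
      simpa using this
  have h1 : Cardinal.mk (Fin 6 → Fin (c + 1)) = ((c + 1) ^ 6 : ℕ) := by
    rw [← Cardinal.power_def, Cardinal.mk_fin, Cardinal.mk_fin, Nat.cast_pow,
      ← Cardinal.power_natCast]
  have h2 : Cardinal.mk (Fin 5 → Fin (m + 1)) = ((m + 1) ^ 5 : ℕ) := by
    rw [← Cardinal.power_def, Cardinal.mk_fin, Cardinal.mk_fin, Nat.cast_pow,
      ← Cardinal.power_natCast]
  have hnum : ((c + 1) ^ 6 : ℕ) ≤ ((m + 1) ^ 5 : ℕ) := by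
    rw [hrank] at hcard
    rw [h1] at hcard
    have hfinal : ((((c+1)^6 : ℕ) : Cardinal.{u})) ≤ (((m+1)^5 : ℕ) : Cardinal.{u}) := by
      calc ((((c+1)^6 : ℕ) : Cardinal.{u})) = Cardinal.lift.{u} (((c+1)^6 : ℕ) : Cardinal.{0}) := by
            rw [Cardinal.lift_natCast]
        _ ≤ Cardinal.lift.{0} (Cardinal.lift.{u} (Cardinal.mk T)) := by exact_mod_cast hcard
        _ = Cardinal.lift.{u} (Cardinal.mk T) := by simp
        _ ≤ Cardinal.lift.{u} (Cardinal.mk (Fin 5 → Fin (m + 1))) := Cardinal.lift_le.mpr hTle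
        _ = (((m+1)^5 : ℕ) : Cardinal.{u}) := by rw [h2, Cardinal.lift_natCast]
    exact_mod_cast hfinal
  have hDc : 1 ≤ D * c := Nat.one_le_iff_ne_zero.mpr (by positivity)
  have hstep1 : m + 1 ≤ 7 * D * c := by
    calc m + 1 = 6 * (D * c) + 1 := by rw [hm]; ring
      _ ≤ 6 * (D * c) + D * c := Nat.add_le_add_left hDc _
      _ = 7 * D * c := by ring
  have hstep2 : (m + 1) ^ 5 ≤ (7 * D) ^ 5 * c ^ 5 := by
    calc (m + 1) ^ 5 ≤ (7 * D * c) ^ 5 := Nat.pow_le_pow_left hstep1 5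
      _ = (7 * D) ^ 5 * c ^ 5 := by ring
  have hstep3 : (7 * D) ^ 5 * c ^ 5 < c ^ 6 := by
    have hlt : (7 * D) ^ 5 < c := by rw [hc]; exact Nat.lt_succ_self _
    calc (7 * D) ^ 5 * c ^ 5 < c * c ^ 5 :=
      Nat.mul_lt_mul_of_lt_of_le hlt le_rfl (by positivity)
      _ = c ^ 6 := by ring
  have hcontra : (c + 1) ^ 6 < (c + 1) ^ 6 :=
    lt_of_le_of_lt hnum (lt_of_le_of_lt hstep2 (lt_of_lt_of_le hstep3
      (Nat.pow_le_pow_left (Nat.le_succ c) 6)))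
  exact lt_irrefl _ hcontra

end Count
section Chain
variable {K : Type*} [Field K]

theorem chain_indep (n : ℕ) :
    ∀ (p : Fin (n+1) → Ideal (MvPolynomial (Fin 5) K)), (∀ i, (p i).IsPrime) → StrictMono p →
    ∀ (r : ℕ) (y : Fin r → MvPolynomial (Fin 5) K),
      AlgebraicIndependent K (fun i => Ideal.Quotient.mk (p (Fin.last n)) (y i)) →
      ∃ Y : Fin (r + n) → MvPolynomial (Fin 5) K,
        AlgebraicIndependent K (fun i => Ideal.Quotient.mk (p 0) (Y i)) := by
  induction n with
  | zero =>
    intro p hp hm r y hy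
    refine ⟨y, ?_⟩
    rwa [show (0 : Fin 1) = Fin.last 0 from rfl]
  | succ n ih =>
    intro p hp hmono r y hy
    have hp' : ∀ i, ((p ∘ Fin.succ) i).IsPrime := fun i => hp _
    have hmono' : StrictMono (p ∘ Fin.succ) := hmono.comp Fin.strictMono_succ
    have hy' : AlgebraicIndependent K
        (fun i => Ideal.Quotient.mk ((p ∘ Fin.succ) (Fin.last n)) (y i)) := by
      have hlast : (p ∘ Fin.succ) (Fin.last n) = p (Fin.last (n+1)) := by
        simp [Function.comp, Fin.succ_last]
      rw [hlast]
      exact hy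
    obtain ⟨Y', hY'⟩ := ih (p ∘ Fin.succ) hp' hmono' r y hy'
    have h01 : p 0 < p 1 := hmono (by norm_num : (0 : Fin (n+2)) < 1)
    obtain ⟨t, htq, htp⟩ := SetLike.exists_of_lt h01
    haveI : (p 0).IsPrime := hp 0
    have hstep := indep_step (K := K) (le_of_lt h01) htq htp (y := Y')
      (by exact hY' : AlgebraicIndependent K (fun i => Ideal.Quotient.mk (p 1) (Y' i)))
    exact ⟨Fin.cons t Y', hstep⟩

/-- the prime `(x₀, x₁, x₂)` -/
noncomputable def P0ideal (K : Type*) [Field K] : Ideal (MvPolynomial (Fin 5) K) :=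
  Ideal.span (X '' ({0, 1, 2} : Set (Fin 5)))

theorem P0ideal_isPrime : (P0ideal K).IsPrime := by
  classical
  exact span_X_isPrime _

theorem base_indep :
    AlgebraicIndependent K
      (fun i : Fin 2 => Ideal.Quotient.mk (P0ideal K) ((![X 3, X 4] : Fin 2 → _) i)) := by
  classical
  rw [algebraicIndependent_iff]
  intro F hF
  have h1 : Ideal.Quotient.mk (P0ideal K) (aeval (![X 3, X 4] : Fin 2 → _) F) = 0 := by
    have hc := comp_aeval_apply (f := (![X 3, X 4] : Fin 2 → MvPolynomial (Fin 5) K))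
      (Ideal.Quotient.mkₐ K (P0ideal K)) F
    rw [show Ideal.Quotient.mk (P0ideal K) (aeval (![X 3, X 4] : Fin 2 → _) F)
      = Ideal.Quotient.mkₐ K (P0ideal K) (aeval (![X 3, X 4] : Fin 2 → _) F) from rfl, hc]
    rw [← hF]
    rfl
  rw [Ideal.Quotient.eq_zero_iff_mem] at h1
  rw [P0ideal, ← ker_aeval_killMap ({0, 1, 2} : Set (Fin 5)), RingHom.mem_ker] at h1
  have h2 : aeval (killMap ({0, 1, 2} : Set (Fin 5)))
      (aeval (![X 3, X 4] : Fin 2 → MvPolynomial (Fin 5) K) F)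
      = aeval (![X 3, X 4] : Fin 2 → MvPolynomial (Fin 5) K) F := by
    rw [comp_aeval_apply (f := (![X 3, X 4] : Fin 2 → MvPolynomial (Fin 5) K))
      (aeval (killMap ({0, 1, 2} : Set (Fin 5))))]
    have hfun : (fun i => aeval (killMap ({0, 1, 2} : Set (Fin 5)))
        ((![X 3, X 4] : Fin 2 → MvPolynomial (Fin 5) K) i))
        = (![X 3, X 4] : Fin 2 → MvPolynomial (Fin 5) K) := by
      funext i
      fin_cases i
      · show aeval (killMap ({0, 1, 2} : Set (Fin 5))) (X 3) = X 3
        rw [aeval_X, killMap, if_neg (by decide)]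
      · show aeval (killMap ({0, 1, 2} : Set (Fin 5))) (X 4) = X 4
        rw [aeval_X, killMap, if_neg (by decide)]
    rw [hfun]
  rw [show ((aeval (killMap ({0,1,2} : Set (Fin 5))) : MvPolynomial (Fin 5) K →ₐ[K]
      MvPolynomial (Fin 5) K) : MvPolynomial (Fin 5) K →+* MvPolynomial (Fin 5) K)
      (aeval (![X 3, X 4] : Fin 2 → MvPolynomial (Fin 5) K) F)
      = aeval (killMap ({0,1,2} : Set (Fin 5)))
        (aeval (![X 3, X 4] : Fin 2 → MvPolynomial (Fin 5) K) F) from rfl, h2] at h1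
  have hXind : AlgebraicIndependent K (![X 3, X 4] : Fin 2 → MvPolynomial (Fin 5) K) := by
    have hX := MvPolynomial.algebraicIndependent_X (Fin 5) K
    have hcomp := hX.comp (![3, 4] : Fin 2 → Fin 5) (by decide)
    have : (X ∘ (![3, 4] : Fin 2 → Fin 5) : Fin 2 → MvPolynomial (Fin 5) K)
        = ![X 3, X 4] := by
      funext i
      fin_cases i <;> rfl
    rwa [this] at hcomp
  exact algebraicIndependent_iff.mp hXind F h1

theorem height_P0_le :
    Order.height (⟨P0ideal K, P0ideal_isPrime (K := K)⟩ : PrimeSpectrum (MvPolynomial (Fin 5) K)) ≤ 3 := by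
  apply Order.height_le
  intro π hlast
  by_contra hlen
  push_neg at hlen
  have h4 : 4 ≤ π.length := by
    have : (3 : ℕ∞) < (π.length : ℕ∞) := hlen
    exact_mod_cast this
  set p : Fin (π.length + 1) → Ideal (MvPolynomial (Fin 5) K) :=
    fun i => (π.toFun i).asIdeal with hpdef
  have hp : ∀ i, (p i).IsPrime := fun i => (π.toFun i).2
  have hmono : StrictMono p := fun i j hij => π.strictMono hij
  have hplast : p (Fin.last π.length) = P0ideal K := by
    show (π.toFun (Fin.last π.length)).asIdeal = P0ideal K
    rw [show π.toFun (Fin.last π.length) = π.last from rfl, hlast]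
  have hbase : AlgebraicIndependent K
      (fun i : Fin 2 => Ideal.Quotient.mk (p (Fin.last π.length))
        ((![X 3, X 4] : Fin 2 → _) i)) := by
    rw [hplast]
    exact base_indep
  obtain ⟨Y, hY⟩ := chain_indep π.length p hp hmono 2 (![X 3, X 4] : Fin 2 → _) hbase
  haveI : (p 0).IsPrime := hp 0
  have hYind : AlgebraicIndependent K Y :=
    AlgebraicIndependent.of_comp (Ideal.Quotient.mkₐ K (p 0)) (by exact hY)
  have h6 : (6 : ℕ) ≤ 2 + π.length := by omega
  have hfinal := hYind.comp (Fin.castLE h6) (Fin.castLE_injective h6)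
  exact not_algIndep_six _ hfinal

end Chain

/-- The ideal `I = (x₁x₃, x₁x₄, x₂x₄, x₂x₅, x₃x₅)` of `K[x_1,…,x_5]` (here `x_k = X (k-1)`)
is a set-theoretic complete intersection: its height is `3` and it is the radical of an
ideal generated by `3` elements. -/
theorem C5_set_theoretic_complete_intersection {K : Type*} [Field K] :
    idealHeight (Ideal.span {X 0 * X 2, X 0 * X 3, X 1 * X 3, X 1 * X 4, X 2 * X 4} :
        Ideal (MvPolynomial (Fin 5) K)) = 3 ∧
    ∃ a : Fin 3 → MvPolynomial (Fin 5) K,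
      (Ideal.span (Set.range a)).radical =
        (Ideal.span {X 0 * X 2, X 0 * X 3, X 1 * X 3, X 1 * X 4, X 2 * X 4} :
          Ideal (MvPolynomial (Fin 5) K)).radical := by
  constructor
  · -- height part
    set I : Ideal (MvPolynomial (Fin 5) K) :=
      Ideal.span {X 0 * X 2, X 0 * X 3, X 1 * X 3, X 1 * X 4, X 2 * X 4} with hI
    have hg1 : (X 0 * X 2 : MvPolynomial (Fin 5) K) ∈ I := Ideal.subset_span (by simp)
    have hg2 : (X 0 * X 3 : MvPolynomial (Fin 5) K) ∈ I := Ideal.subset_span (by simp)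
    have hg3 : (X 1 * X 3 : MvPolynomial (Fin 5) K) ∈ I := Ideal.subset_span (by simp)
    have hg4 : (X 1 * X 4 : MvPolynomial (Fin 5) K) ∈ I := Ideal.subset_span (by simp)
    have hg5 : (X 2 * X 4 : MvPolynomial (Fin 5) K) ∈ I := Ideal.subset_span (by simp)
    rw [idealHeight]
    apply le_antisymm
    · -- upper bound via P0
      have hmem : I ≤ (⟨P0ideal K, P0ideal_isPrime (K := K)⟩ :
          PrimeSpectrum (MvPolynomial (Fin 5) K)).asIdeal := by
        rw [hI, Ideal.span_le]
        rintro x hx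
        simp only [Set.mem_insert_iff, Set.mem_singleton_iff] at hx
        have m0 : (X 0 : MvPolynomial (Fin 5) K) ∈ P0ideal K :=
          Ideal.subset_span ⟨0, by simp, rfl⟩
        have m1 : (X 1 : MvPolynomial (Fin 5) K) ∈ P0ideal K :=
          Ideal.subset_span ⟨1, by simp, rfl⟩
        have m2 : (X 2 : MvPolynomial (Fin 5) K) ∈ P0ideal K :=
          Ideal.subset_span ⟨2, by simp, rfl⟩
        rcases hx with rfl | rfl | rfl | rfl | rfl
        · exact Ideal.mul_mem_right _ _ m0
        · exact Ideal.mul_mem_right _ _ m0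
        · exact Ideal.mul_mem_right _ _ m1
        · exact Ideal.mul_mem_right _ _ m1
        · exact Ideal.mul_mem_right _ _ m2
      refine le_trans (iInf₂_le (⟨P0ideal K, P0ideal_isPrime (K := K)⟩ :
        PrimeSpectrum (MvPolynomial (Fin 5) K)) hmem) (height_P0_le (K := K))
    · -- lower bound
      refine le_iInf₂ ?_
      intro P hP
      have h02 : (X 0 * X 2 : MvPolynomial (Fin 5) K) ∈ P.asIdeal := hP hg1
      have h03 : (X 0 * X 3 : MvPolynomial (Fin 5) K) ∈ P.asIdeal := hP hg2
      have h13 : (X 1 * X 3 : MvPolynomial (Fin 5) K) ∈ P.asIdeal := hP hg3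
      have h14 : (X 1 * X 4 : MvPolynomial (Fin 5) K) ∈ P.asIdeal := hP hg4
      have h24 : (X 2 * X 4 : MvPolynomial (Fin 5) K) ∈ P.asIdeal := hP hg5
      rcases P.2.mem_or_mem h02 with h0 | h2
      · rcases P.2.mem_or_mem h13 with h1 | h3
        · rcases P.2.mem_or_mem h24 with h2 | h4
          · exact three_le_height (by decide) (by decide) (by decide) h0 h1 h2
          · exact three_le_height (by decide) (by decide) (by decide) h0 h1 h4
        · rcases P.2.mem_or_mem h14 with h1 | h4
          · exact three_le_height (by decide) (by decide) (by decide) h0 h1 h3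
          · exact three_le_height (by decide) (by decide) (by decide) h0 h3 h4
      · rcases P.2.mem_or_mem h03 with h0 | h3
        · rcases P.2.mem_or_mem h14 with h1 | h4
          · exact three_le_height (by decide) (by decide) (by decide) h0 h1 h2
          · exact three_le_height (by decide) (by decide) (by decide) h0 h2 h4
        · rcases P.2.mem_or_mem h14 with h1 | h4
          · exact three_le_height (by decide) (by decide) (by decide) h1 h2 h3
          · exact three_le_height (by decide) (by decide) (by decide) h2 h3 h4
  · -- radical part
    set f1 : MvPolynomial (Fin 5) K := X 0 * X 2 with hf1
    set f2 : MvPolynomial (Fin 5) K := X 0 * X 3 + X 1 * X 4 with hf2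
    set f3 : MvPolynomial (Fin 5) K := X 1 * X 3 + X 2 * X 4 with hf3
    refine ⟨![f1, f2, f3], ?_⟩
    set I : Ideal (MvPolynomial (Fin 5) K) :=
      Ideal.span {X 0 * X 2, X 0 * X 3, X 1 * X 3, X 1 * X 4, X 2 * X 4}
    set J : Ideal (MvPolynomial (Fin 5) K) := Ideal.span (Set.range ![f1, f2, f3]) with hJ
    have hf1J : f1 ∈ J := Ideal.subset_span ⟨0, rfl⟩
    have hf2J : f2 ∈ J := Ideal.subset_span ⟨1, rfl⟩
    have hf3J : f3 ∈ J := Ideal.subset_span ⟨2, rfl⟩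
    have h03 : (X 0 * X 3 : MvPolynomial (Fin 5) K) ∈ J.radical := by
      rw [Ideal.mem_radical_iff]
      refine ⟨2, ?_⟩
      have heq : (X 0 * X 3 : MvPolynomial (Fin 5) K) ^ 2
          = (X 0 * X 3) * f2 + (- (X 0 * X 4)) * f3 + (X 4 * X 4) * f1 := by
        rw [hf1, hf2, hf3]; ring
      rw [heq]
      exact Ideal.add_mem _ (Ideal.add_mem _ (Ideal.mul_mem_left _ _ hf2J)
        (Ideal.mul_mem_left _ _ hf3J)) (Ideal.mul_mem_left _ _ hf1J)
    have h13 : (X 1 * X 3 : MvPolynomial (Fin 5) K) ∈ J.radical := by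
      rw [Ideal.mem_radical_iff]
      refine ⟨2, ?_⟩
      have heq : (X 1 * X 3 : MvPolynomial (Fin 5) K) ^ 2
          = (X 1 * X 3) * f3 + (- (X 2 * X 3)) * f2 + (X 3 * X 3) * f1 := by
        rw [hf1, hf2, hf3]; ring
      rw [heq]
      exact Ideal.add_mem _ (Ideal.add_mem _ (Ideal.mul_mem_left _ _ hf3J)
        (Ideal.mul_mem_left _ _ hf2J)) (Ideal.mul_mem_left _ _ hf1J)
    have h14 : (X 1 * X 4 : MvPolynomial (Fin 5) K) ∈ J.radical := by
      have heq : (X 1 * X 4 : MvPolynomial (Fin 5) K) = f2 - X 0 * X 3 := by rw [hf2]; ring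
      rw [heq]
      exact Submodule.sub_mem _ (Ideal.le_radical hf2J) h03
    have h24 : (X 2 * X 4 : MvPolynomial (Fin 5) K) ∈ J.radical := by
      have heq : (X 2 * X 4 : MvPolynomial (Fin 5) K) = f3 - X 1 * X 3 := by rw [hf3]; ring
      rw [heq]
      exact Submodule.sub_mem _ (Ideal.le_radical hf3J) h13
    have hJI : J ≤ I := by
      rw [hJ, Ideal.span_le]
      rintro x ⟨i, rfl⟩
      fin_cases i
      · exact Ideal.subset_span (by simp [hf1])
      · exact Ideal.add_mem _ (Ideal.subset_span (by simp)) (Ideal.subset_span (by simp))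
      · exact Ideal.add_mem _ (Ideal.subset_span (by simp)) (Ideal.subset_span (by simp))
    have hIJr : I ≤ J.radical := by
      rw [Ideal.span_le]
      rintro x hx
      simp only [Set.mem_insert_iff, Set.mem_singleton_iff] at hx
      rcases hx with rfl | rfl | rfl | rfl | rfl
      · exact Ideal.le_radical hf1J
      · exact h03
      · exact h13
      · exact h14
      · exact h24
    refine le_antisymm (Ideal.radical_mono hJI) ?_
    calc I.radical ≤ J.radical.radical := Ideal.radical_mono hIJr
      _ = J.radical := Ideal.radical_idem _
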